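/- Let 0 ≤ β < 1 and r > 1, and let x₀ = (x₀₁, x₀₂) have positive integer entries. Then in a (β, r, x₀)-urn process X, color 1 (the fitter color) almost surely eventually leads forever: with probability one there exists a (random) time t* such that X₁(t) > X₂(t) for all t ≥ t*. -/

import Mathlib

open MeasureTheory Filter

noncomputable section

/-- Transition probability of the nonlinear Pólya urn with feedback strength `β` and
fitness ratio `r`: from `(x₁,x₂)` move to `(x₁+1,x₂)` with probability
`r·x₁^β/(r·x₁^β + x₂^β)`, to `(x₁,x₂+1)` with probability `x₂^β/(r·x₁^β + x₂^β)`,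
and nowhere else. -/
def urnStep (β r : ℝ) (x y : ℕ × ℕ) : ℝ :=
  if y = (x.1 + 1, x.2) then r * (x.1 : ℝ) ^ β / (r * (x.1 : ℝ) ^ β + (x.2 : ℝ) ^ β)
  else if y = (x.1, x.2 + 1) then (x.2 : ℝ) ^ β / (r * (x.1 : ℝ) ^ β + (x.2 : ℝ) ^ β)
  else 0

/-- `μ` is the law (on trajectories `ℕ → ℕ × ℕ`) of a `(β,r,x₀)`-urn process:
a probability measure under which each finite initial trajectory starting at `x₀`
has probability equal to the product of the one-step urn transition probabilities. -/
def IsUrnProcess (μ : Measure (ℕ → ℕ × ℕ)) (β r : ℝ) (x₀ : ℕ × ℕ) : Prop :=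
  IsProbabilityMeasure μ ∧
  ∀ (n : ℕ) (path : ℕ → ℕ × ℕ), path 0 = x₀ →
    (μ {ω | ∀ t ≤ n, ω t = path t}).toReal
      = ∏ t ∈ Finset.range n, urnStep β r (path t) (path (t + 1))

/-- `N_t`: the number of ties up to (and including) time `t`. -/
def numTiesUpTo (ω : ℕ → ℕ × ℕ) (t : ℕ) : ℕ :=
  ((Finset.range (t + 1)).filter (fun j => (ω j).1 = (ω j).2)).card

/-- The intensity `N`: the total number of ties (possibly `∞`). -/
def intensity (ω : ℕ → ℕ × ℕ) : ℕ∞ :=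
  {t : ℕ | (ω t).1 = (ω t).2}.encard

/-- `T_n` (for `n ≥ 1`): the time of the `n`-th tie, i.e. the (unique, if it exists) time `s`
at which a tie occurs and the number of ties up to `s` equals `n`; `⊤` if there is no such time. -/
def nthTieTime (n : ℕ) (ω : ℕ → ℕ × ℕ) : ℕ∞ :=
  sInf {t : ℕ∞ | ∃ s : ℕ, t = (s : ℕ∞) ∧ (ω s).1 = (ω s).2 ∧ numTiesUpTo ω s = n}

/-- The event `{T ≥ t}` where `T` is the duration (time of the last tie, with the convention
`T = -1` if there is no tie): for `t : ℕ` this event is exactly `{∃ s ≥ t, a tie occurs at s}`. -/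
def durationTail (t : ℕ) : Set (ℕ → ℕ × ℕ) :=
  {ω | ∃ s, t ≤ s ∧ (ω s).1 = (ω s).2}

/-!
A tie is left upwards with probability at least `r / (r + 1)`, and while color 1 leads,
`X₁ - X₂` dominates a random walk biased towards color 1, which never returns to `0` with
probability at least `1 - r⁻¹`. So every tie is the last one with probability at least
`(r - 1) / (r + 1)`, and by the Markov property the number of ties has a geometric tail:
there are finitely many ties almost surely.

Color 2 cannot lead forever either: while `X₁ ≤ X₂`, the process
`X₂ ^ (1 - β) - (X₁ - 1) ^ (1 - β)` is a nonnegative supermartingale whose drift is at most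
`-(1 - β)(r - 1) / (r + 1) · (X₁ + X₂) ^ (-β)`. Since `∑ n ^ (-β)` diverges for `β < 1`, the
urn reaches a tie almost surely. After the last tie, color 1 therefore leads forever.
-/

lemma rpow_le_rpow_add_mul_sub {p u v : ℝ} (hp0 : 0 ≤ p) (hp1 : p ≤ 1) (hu : 0 < u)
    (hv : 0 ≤ v) : v ^ p ≤ u ^ p + p * u ^ (p - 1) * (v - u) := by
  have hb := rpow_one_add_le_one_add_mul_self (s := v / u - 1)
    (by have : 0 ≤ v / u := by positivity
        linarith) hp0 hp1
  rw [add_sub_cancel, Real.div_rpow hv hu.le, div_le_iff₀ (by positivity)] at hb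
  rw [Real.rpow_sub_one hu.ne']
  calc v ^ p ≤ (1 + p * (v / u - 1)) * u ^ p := hb
    _ = u ^ p + p * (u ^ p / u) * (v - u) := by field_simp

lemma measure_sdiff_le_of_mul_le_measure_inter {α : Type*} [MeasurableSpace α] {μ : Measure α}
    [IsFiniteMeasure μ] {A N : Set α} (hN : MeasurableSet N) {c q : ENNReal} (hqc : q + c = 1)
    (h : c * μ A ≤ μ (A ∩ N)) : μ (A \ N) ≤ q * μ A := by
  have hc : c ≠ ⊤ := ne_top_of_le_ne_top ENNReal.one_ne_top (hqc ▸ le_add_self)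
  refine (ENNReal.add_le_add_iff_right (ENNReal.mul_ne_top hc (measure_ne_top μ A))).1 ?_
  calc μ (A \ N) + c * μ A ≤ μ (A \ N) + μ (A ∩ N) := by gcongr
    _ = q * μ A + c * μ A := by
      rw [add_comm, measure_inter_add_sdiff A hN, ← add_mul, hqc, one_mul]

section DependsOn

variable {ι α : Type*} {A B : Set (ι → α)} {I : Set ι}

lemma DependsOn.preimage_domRestrict_image (hA : DependsOn (· ∈ A) I) :
    I.domRestrict ⁻¹' (I.domRestrict '' A) = A := by
  refine Set.Subset.antisymm ?_ (Set.subset_preimage_image _ _)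
  rintro ω ⟨ω', hω', heq⟩
  exact (hA fun i hi => congrFun heq ⟨i, hi⟩).mp hω'

lemma DependsOn.mem_inter (hA : DependsOn (· ∈ A) I) (hB : DependsOn (· ∈ B) I) :
    DependsOn (· ∈ A ∩ B) I := fun ω ω' h => by
  simp only [Set.mem_inter_iff, hA h, hB h]

lemma dependsOn_mem_setOf_apply_eq {t s : ℕ} (hts : t ≤ s) (y : α) :
    DependsOn (· ∈ {ω : ℕ → α | ω t = y}) (Set.Iic s) := fun ω ω' h => by
  simp [h t hts]

lemma DependsOn.measurableSet [MeasurableSpace α] [MeasurableSingletonClass α] [Countable α]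
    {A : Set (ℕ → α)} {s : ℕ} (hA : DependsOn (· ∈ A) (Set.Iic s)) : MeasurableSet A := by
  rw [← hA.preimage_domRestrict_image]
  exact (by fun_prop : Measurable (Set.Iic s).domRestrict) (Set.to_countable _).measurableSet

end DependsOn

namespace Urn

def up (x : ℕ × ℕ) : ℕ × ℕ := (x.1 + 1, x.2)

def dn (x : ℕ × ℕ) : ℕ × ℕ := (x.1, x.2 + 1)

def urnWeight (β r : ℝ) (x : ℕ × ℕ) : ℝ := r * (x.1 : ℝ) ^ β + (x.2 : ℝ) ^ β

def probUp (β r : ℝ) (x : ℕ × ℕ) : ℝ := r * (x.1 : ℝ) ^ β / urnWeight β r x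

def probDn (β r : ℝ) (x : ℕ × ℕ) : ℝ := (x.2 : ℝ) ^ β / urnWeight β r x

section Steps

variable {β r : ℝ} {x y : ℕ × ℕ}

lemma up_ne_dn (x : ℕ × ℕ) : up x ≠ dn x := by
  simp [up, dn]

lemma urnStep_up : urnStep β r x (up x) = probUp β r x := by
  simp [urnStep, up, probUp, urnWeight]

lemma urnStep_dn : urnStep β r x (dn x) = probDn β r x := by
  simp [urnStep, dn, probDn, urnWeight]

lemma urnStep_eq_zero (hup : y ≠ up x) (hdn : y ≠ dn x) : urnStep β r x y = 0 := by
  rw [urnStep, if_neg (show ¬y = (x.1 + 1, x.2) from hup),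
    if_neg (show ¬y = (x.1, x.2 + 1) from hdn)]

lemma urnStep_nonneg (hr : 0 ≤ r) : 0 ≤ urnStep β r x y := by
  unfold urnStep
  split_ifs <;> positivity

lemma urnWeight_pos (hr : 0 < r) (hx : 0 < x.1) : 0 < urnWeight β r x := by
  unfold urnWeight
  have : (0 : ℝ) < (x.1 : ℝ) ^ β := by positivity
  positivity

lemma probUp_nonneg (hr : 0 ≤ r) : 0 ≤ probUp β r x := by
  unfold probUp urnWeight
  positivity

lemma probDn_nonneg (hr : 0 ≤ r) : 0 ≤ probDn β r x := by
  unfold probDn urnWeight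
  positivity

lemma probUp_add_probDn (hr : 0 < r) (hx : 0 < x.1) : probUp β r x + probDn β r x = 1 := by
  rw [probUp, probDn, ← add_div]
  exact div_self (urnWeight_pos hr hx).ne'

lemma div_le_probUp (hβ : 0 ≤ β) (hr : 0 < r) (hx : 0 < x.1) (hle : x.2 ≤ x.1) :
    r / (r + 1) ≤ probUp β r x := by
  have hpow : (x.2 : ℝ) ^ β ≤ (x.1 : ℝ) ^ β := by gcongr
  have hpos : (0 : ℝ) < (x.1 : ℝ) ^ β := by positivity
  rw [probUp, div_le_div_iff₀ (by positivity) (urnWeight_pos hr hx), urnWeight]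
  nlinarith

end Steps

/-- The probability that the urn started at `x` has no tie at times `0, …, m`. -/
def noTieProb (β r : ℝ) : ℕ → ℕ × ℕ → ℝ
  | 0, x => if x.1 = x.2 then 0 else 1
  | m + 1, x => if x.1 = x.2 then 0 else
      probUp β r x * noTieProb β r m (up x) + probDn β r x * noTieProb β r m (dn x)

section NoTieProb

variable {β r : ℝ} {x : ℕ × ℕ}

lemma noTieProb_of_eq (h : x.1 = x.2) (m : ℕ) : noTieProb β r m x = 0 := by
  cases m <;> simp [noTieProb, h]

lemma noTieProb_zero_of_ne (h : x.1 ≠ x.2) : noTieProb β r 0 x = 1 := by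
  simp [noTieProb, h]

lemma noTieProb_succ_of_ne (h : x.1 ≠ x.2) (m : ℕ) :
    noTieProb β r (m + 1) x =
      probUp β r x * noTieProb β r m (up x) + probDn β r x * noTieProb β r m (dn x) := by
  simp [noTieProb, h]

lemma noTieProb_nonneg (hr : 0 ≤ r) (m : ℕ) (x : ℕ × ℕ) : 0 ≤ noTieProb β r m x := by
  induction m generalizing x with
  | zero => unfold noTieProb; split_ifs <;> norm_num
  | succ m ih =>
    unfold noTieProb
    split_ifs
    · rfl
    · have := probUp_nonneg (β := β) (x := x) hr
      have := probDn_nonneg (β := β) (x := x) hr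
      have := ih (up x)
      have := ih (dn x)
      positivity

/-- Gambler's ruin: while color 1 leads, `X₁ - X₂` dominates a random walk with upward
probability `r / (r + 1)`, which avoids `0` from height `d` with probability `1 - r⁻¹ ^ d`. -/
lemma one_sub_inv_pow_le_noTieProb (hβ : 0 ≤ β) (hr : 1 < r) (m : ℕ) :
    ∀ (x : ℕ × ℕ) (d : ℕ), x.1 = x.2 + d → 1 - r⁻¹ ^ d ≤ noTieProb β r m x := by
  have hr0 : 0 < r := by linarith
  have hρ0 : 0 < r⁻¹ := by positivity
  have hρ1 : r⁻¹ < 1 := inv_lt_one_of_one_lt₀ hr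
  induction m with
  | zero =>
    intro x d hd
    rcases Nat.eq_zero_or_pos d with rfl | hd0
    · simp [noTieProb_of_eq (show x.1 = x.2 by omega)]
    · rw [noTieProb_zero_of_ne (by omega)]
      linarith [pow_pos hρ0 d]
  | succ m ih =>
    intro x d hd
    obtain rfl | ⟨e, rfl⟩ : d = 0 ∨ ∃ e, d = e + 1 := by cases d <;> simp
    · simp [noTieProb_of_eq (show x.1 = x.2 by omega)]
    rw [noTieProb_succ_of_ne (by omega)]
    have hU := ih (up x) (e + 2) (by simp only [up]; omega)
    have hD := ih (dn x) e (by simp only [dn]; omega)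
    have hp := div_le_probUp (x := x) hβ hr0 (by omega) (by omega)
    have hpq := probUp_add_probDn (β := β) hr0 (show 0 < x.1 by omega)
    have hq0 := probDn_nonneg (β := β) (x := x) hr0.le
    have hp0 := probUp_nonneg (β := β) (x := x) hr0.le
    -- the bound is preserved because `probUp x * (1 + r⁻¹) ≥ 1`
    have hkey : 1 ≤ probUp β r x * (1 + r⁻¹) := by
      calc (1 : ℝ) = r / (r + 1) * (1 + r⁻¹) := by field_simp
        _ ≤ probUp β r x * (1 + r⁻¹) := by gcongr
    calc 1 - r⁻¹ ^ (e + 1)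
        ≤ probUp β r x * (1 - r⁻¹ ^ (e + 2)) + probDn β r x * (1 - r⁻¹ ^ e) := by
          have : 0 ≤ r⁻¹ ^ e * (1 - r⁻¹) * (probUp β r x * (1 + r⁻¹) - 1) := by
            have := pow_pos hρ0 e
            have : 0 ≤ 1 - r⁻¹ := by linarith
            have : 0 ≤ probUp β r x * (1 + r⁻¹) - 1 := by linarith
            positivity
          rw [← sub_nonneg]
          convert this using 1
          rw [show probDn β r x = 1 - probUp β r x by linarith]
          ring
      _ ≤ probUp β r x * noTieProb β r m (up x) + probDn β r x * noTieProb β r m (dn x) := by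
          gcongr

lemma div_le_probUp_mul_noTieProb_up (hβ : 0 ≤ β) (hr : 1 < r) (hx : 0 < x.1) (htie : x.1 = x.2)
    (m : ℕ) :
    (r - 1) / (r + 1) ≤ probUp β r x * noTieProb β r m (up x) := by
  have hp := div_le_probUp (β := β) hβ (by linarith) hx htie.ge
  have hs := one_sub_inv_pow_le_noTieProb (β := β) hβ hr m (up x) 1 (by simp only [up]; omega)
  have h0 : 0 ≤ 1 - r⁻¹ ^ 1 := by
    rw [pow_one, sub_nonneg]
    exact inv_le_one_of_one_le₀ hr.le
  calc (r - 1) / (r + 1) = r / (r + 1) * (1 - r⁻¹ ^ 1) := by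
        field_simp
    _ ≤ probUp β r x * noTieProb β r m (up x) := by
        gcongr
        exact (div_nonneg (by linarith) (by linarith)).trans hp

end NoTieProb

def lyapunov (β : ℝ) (x : ℕ × ℕ) : ℝ := (x.2 : ℝ) ^ (1 - β) - ((x.1 : ℝ) - 1) ^ (1 - β)

section Lyapunov

variable {β r : ℝ} {x : ℕ × ℕ}

lemma lyapunov_nonneg (hβ : β < 1) (hx : 0 < x.1) (hle : x.1 ≤ x.2 + 1) : 0 ≤ lyapunov β x := by
  have h1 : (1 : ℝ) ≤ x.1 := by exact_mod_cast hx
  have h2 : (x.1 : ℝ) - 1 ≤ x.2 := by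
    have : (x.1 : ℝ) ≤ x.2 + 1 := by exact_mod_cast hle
    linarith
  rw [lyapunov, sub_nonneg]
  exact Real.rpow_le_rpow (by linarith) h2 (by linarith)

lemma probUp_mul_rpow_neg (hr : 0 < r) (hx : 0 < x.1) :
    probUp β r x * (x.1 : ℝ) ^ (-β) = r / urnWeight β r x := by
  have : (0 : ℝ) < x.1 := by exact_mod_cast hx
  rw [probUp, Real.rpow_neg this.le]
  field_simp

lemma probDn_mul_rpow_neg (hx : 0 < x.2) :
    probDn β r x * (x.2 : ℝ) ^ (-β) = 1 / urnWeight β r x := by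
  have : (0 : ℝ) < x.2 := by exact_mod_cast hx
  rw [probDn, Real.rpow_neg this.le]
  field_simp

lemma urnWeight_le (hβ : 0 ≤ β) (hr : 0 ≤ r) :
    urnWeight β r x ≤ (r + 1) * ((x.1 + x.2 : ℕ) : ℝ) ^ β := by
  have h1 : (x.1 : ℝ) ^ β ≤ ((x.1 + x.2 : ℕ) : ℝ) ^ β := by gcongr; omega
  have h2 : (x.2 : ℝ) ^ β ≤ ((x.1 + x.2 : ℕ) : ℝ) ^ β := by gcongr; omega
  rw [urnWeight]
  nlinarith

/-- The expected increments of `X₁ ^ (1 - β)` and `X₂ ^ (1 - β)` are about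
`r (1 - β) / urnWeight β r x` and `(1 - β) / urnWeight β r x`; shifting `X₁` by `1` makes the
discretisation error of the first one work in our favour. -/
lemma lyapunov_drift (hβ0 : 0 ≤ β) (hβ1 : β < 1) (hr : 1 ≤ r) (hx1 : 0 < x.1) (hx2 : 0 < x.2) :
    probUp β r x * lyapunov β (up x) + probDn β r x * lyapunov β (dn x)
      + (1 - β) * (r - 1) / (r + 1) * ((x.1 + x.2 : ℕ) : ℝ) ^ (-β) ≤ lyapunov β x := by
  have ha : (1 : ℝ) ≤ x.1 := Nat.one_le_cast.mpr hx1
  have hb : (1 : ℝ) ≤ x.2 := Nat.one_le_cast.mpr hx2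
  have hS : 0 < urnWeight β r x := urnWeight_pos (by linarith) hx1
  have hpq := probUp_add_probDn (β := β) (by linarith : (0 : ℝ) < r) hx1
  have hup : lyapunov β (up x) = (x.2 : ℝ) ^ (1 - β) - (x.1 : ℝ) ^ (1 - β) := by
    simp [lyapunov, up]
  have hdn : lyapunov β (dn x) = ((x.2 : ℝ) + 1) ^ (1 - β) - ((x.1 : ℝ) - 1) ^ (1 - β) := by
    simp [lyapunov, dn]
  have hta := rpow_le_rpow_add_mul_sub (p := 1 - β) (u := (x.1 : ℝ)) (v := (x.1 : ℝ) - 1)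
    (by linarith) (by linarith) (by linarith) (by linarith)
  have htb := rpow_le_rpow_add_mul_sub (p := 1 - β) (u := (x.2 : ℝ)) (v := (x.2 : ℝ) + 1)
    (by linarith) (by linarith) (by linarith) (by linarith)
  rw [sub_sub_cancel_left] at hta htb
  have hA := mul_le_mul_of_nonneg_left hta (probUp_nonneg (β := β) (r := r) (x := x) (by linarith))
  have hB := mul_le_mul_of_nonneg_left htb (probDn_nonneg (β := β) (r := r) (x := x) (by linarith))
  have hδ : (1 - β) * (r - 1) / (r + 1) * ((x.1 + x.2 : ℕ) : ℝ) ^ (-β)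
      ≤ (1 - β) * ((r - 1) / urnWeight β r x) := by
    rw [Real.rpow_neg (by positivity), mul_div_assoc, mul_assoc, ← div_eq_mul_inv, div_div]
    gcongr
    exact urnWeight_le hβ0 (by linarith)
  rw [hup, hdn, lyapunov]
  linear_combination hA + hB + hδ + ((x.2 : ℝ) ^ (1 - β) - ((x.1 : ℝ) - 1) ^ (1 - β)) * hpq
    - (1 - β) * probUp_mul_rpow_neg (β := β) (r := r) (by linarith) hx1
    + (1 - β) * probDn_mul_rpow_neg (β := β) (r := r) hx2

/-- Optional stopping for the supermartingale `lyapunov` killed at the first tie: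
`noTieProb j x` is the probability that the compensator still runs at time `j`. -/
lemma sum_rpow_mul_noTieProb_le (hβ0 : 0 ≤ β) (hβ1 : β < 1) (hr : 1 ≤ r) (m : ℕ) :
    ∀ x : ℕ × ℕ, 0 < x.1 → x.1 ≤ x.2 →
      (1 - β) * (r - 1) / (r + 1) *
        ∑ j ∈ Finset.range m, ((x.1 + x.2 + j : ℕ) : ℝ) ^ (-β) * noTieProb β r j x
        ≤ lyapunov β x := by
  set δ := (1 - β) * (r - 1) / (r + 1)
  induction m with
  | zero =>
    intro x hx hle
    simpa using lyapunov_nonneg hβ1 hx (by omega)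
  | succ m ih =>
    intro x hx hle
    rcases hle.eq_or_lt with htie | hlt
    · simpa [noTieProb_of_eq htie] using lyapunov_nonneg hβ1 hx (by omega)
    have hne : x.1 ≠ x.2 := hlt.ne
    set U := ∑ j ∈ Finset.range m,
      (((up x).1 + (up x).2 + j : ℕ) : ℝ) ^ (-β) * noTieProb β r j (up x)
    set D := ∑ j ∈ Finset.range m,
      (((dn x).1 + (dn x).2 + j : ℕ) : ℝ) ^ (-β) * noTieProb β r j (dn x)
    have hU : δ * U ≤ lyapunov β (up x) := ih (up x) (by simp [up]) (by simp only [up]; omega)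
    have hD : δ * D ≤ lyapunov β (dn x) := ih (dn x) hx (by simp only [dn]; omega)
    have hsucc : ∑ j ∈ Finset.range m,
          ((x.1 + x.2 + (j + 1) : ℕ) : ℝ) ^ (-β) * noTieProb β r (j + 1) x
        = probUp β r x * U + probDn β r x * D := by
      rw [Finset.mul_sum, Finset.mul_sum, ← Finset.sum_add_distrib]
      refine Finset.sum_congr rfl fun j _ => ?_
      have hu : (up x).1 + (up x).2 + j = x.1 + x.2 + (j + 1) := by simp only [up]; omega
      have hd : (dn x).1 + (dn x).2 + j = x.1 + x.2 + (j + 1) := by simp only [dn]; omega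
      rw [hu, hd, noTieProb_succ_of_ne hne]
      ring
    have hp := probUp_nonneg (β := β) (x := x) (by linarith : (0 : ℝ) ≤ r)
    have hq := probDn_nonneg (β := β) (x := x) (by linarith : (0 : ℝ) ≤ r)
    rw [Finset.sum_range_succ', hsucc, noTieProb_zero_of_ne hne, Nat.add_zero, mul_one]
    calc δ * (probUp β r x * U + probDn β r x * D + ((x.1 + x.2 : ℕ) : ℝ) ^ (-β))
        = probUp β r x * (δ * U) + probDn β r x * (δ * D)
          + δ * ((x.1 + x.2 : ℕ) : ℝ) ^ (-β) := by ring
      _ ≤ probUp β r x * lyapunov β (up x) + probDn β r x * lyapunov β (dn x)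
          + δ * ((x.1 + x.2 : ℕ) : ℝ) ^ (-β) := by gcongr
      _ ≤ lyapunov β x := lyapunov_drift hβ0 hβ1 hr hx (by omega)

lemma exists_noTieProb_lt (hβ0 : 0 ≤ β) (hβ1 : β < 1) (hr : 1 < r) (hx : 0 < x.1)
    (hle : x.1 ≤ x.2) {ε : ℝ} (hε : 0 < ε) : ∃ m, noTieProb β r m x < ε := by
  by_contra! h
  set δ := (1 - β) * (r - 1) / (r + 1)
  have hδ : 0 < δ := by
    apply div_pos (mul_pos _ _) <;> linarith
  have hdiv : ¬ Summable fun j : ℕ => ((x.1 + x.2 + j : ℕ) : ℝ) ^ (-β) := by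
    have h1 : ¬ Summable fun n : ℕ => (n : ℝ) ^ (-β) := by
      rw [Real.summable_nat_rpow]
      linarith
    rw [← summable_nat_add_iff (x.1 + x.2)] at h1
    simpa only [add_comm] using h1
  refine hdiv (summable_of_sum_range_le (c := lyapunov β x / (δ * ε))
    (fun j => by positivity) fun m => ?_)
  rw [le_div_iff₀ (by positivity), Finset.sum_mul]
  refine le_trans ?_ (sum_rpow_mul_noTieProb_le hβ0 hβ1 hr.le m x hx hle)
  rw [Finset.mul_sum]
  refine Finset.sum_le_sum fun j _ => ?_
  calc ((x.1 + x.2 + j : ℕ) : ℝ) ^ (-β) * (δ * ε)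
      = δ * (((x.1 + x.2 + j : ℕ) : ℝ) ^ (-β) * ε) := by ring
    _ ≤ δ * (((x.1 + x.2 + j : ℕ) : ℝ) ^ (-β) * noTieProb β r j x) := by gcongr; exact h j

end Lyapunov

def cylinderUpTo (s : ℕ) (ω : ℕ → ℕ × ℕ) : Set (ℕ → ℕ × ℕ) := {ω' | ∀ t ≤ s, ω' t = ω t}

def noTieOn (s m : ℕ) : Set (ℕ → ℕ × ℕ) := {ω | ∀ k ≤ m, (ω (s + k)).1 ≠ (ω (s + k)).2}

lemma domRestrict_preimage_singleton (s : ℕ) (ω : ℕ → ℕ × ℕ) :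
    (Set.Iic s).domRestrict (π := fun _ => ℕ × ℕ) ⁻¹' {(Set.Iic s).domRestrict ω} =
      cylinderUpTo s ω := by
  ext ω'
  simp [cylinderUpTo, funext_iff]

lemma cylinderUpTo_inter_setOf_apply_succ (s : ℕ) (ω : ℕ → ℕ × ℕ) (y : ℕ × ℕ) :
    cylinderUpTo s ω ∩ {ω' | ω' (s + 1) = y} =
      cylinderUpTo (s + 1) (Function.update ω (s + 1) y) := by
  ext ω'
  simp only [cylinderUpTo, Set.mem_inter_iff, Set.mem_ofPred_eq]
  refine ⟨fun ⟨h, hy⟩ t ht => ?_, fun h => ⟨fun t ht => ?_, ?_⟩⟩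
  · rcases ht.lt_or_eq with ht | rfl
    · rw [Function.update_of_ne (by omega)]
      exact h t (by omega)
    · simpa using hy
  · rw [h t (by omega), Function.update_of_ne (by omega)]
  · simpa using h (s + 1) le_rfl

lemma noTieOn_succ (s m : ℕ) :
    noTieOn s (m + 1) = {ω | (ω s).1 ≠ (ω s).2} ∩ noTieOn (s + 1) m := by
  ext ω
  simp only [noTieOn, Set.mem_inter_iff, Set.mem_ofPred_eq]
  refine ⟨fun h => ⟨h 0 (Nat.zero_le _), fun k hk => ?_⟩, fun ⟨h0, h⟩ k hk => ?_⟩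
  · rw [show s + 1 + k = s + (k + 1) by omega]
    exact h (k + 1) (by omega)
  · rcases k with _ | k
    · exact h0
    · rw [show s + (k + 1) = s + 1 + k by omega]
      exact h k (by omega)

lemma dependsOn_noTieOn (s m : ℕ) : DependsOn (· ∈ noTieOn s m) (Set.Iic (s + m)) :=
  fun ω ω' h => by
    simp only [noTieOn, Set.mem_ofPred_eq]
    refine propext (forall₂_congr fun k hk => ?_)
    rw [h (s + k) (by simp; omega)]

lemma compl_durationTail_subset_noTieOn (s m : ℕ) : (durationTail s)ᶜ ⊆ noTieOn s m :=
  fun ω hω k _ htie => hω ⟨s + k, by omega, htie⟩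

lemma iUnion_compl_noTieOn (s : ℕ) : ⋃ m, (noTieOn s m)ᶜ = durationTail s := by
  ext ω
  simp only [Set.mem_iUnion, Set.mem_compl_iff, noTieOn, Set.mem_ofPred_eq, not_forall,
    not_not, durationTail]
  constructor
  · rintro ⟨m, k, -, h⟩
    exact ⟨s + k, by omega, h⟩
  · rintro ⟨t, hst, h⟩
    exact ⟨t - s, t - s, le_rfl, by rwa [Nat.add_sub_cancel' hst]⟩

/-- The `n`-th tie, counted from `0`, happens at time `s` in state `(k, k)`. -/
def nthTieAt (n s k : ℕ) : Set (ℕ → ℕ × ℕ) :=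
  {ω | ω s = (k, k) ∧ Nat.count (fun t => (ω t).1 = (ω t).2) s = n}

def hasNthTie (n : ℕ) : Set (ℕ → ℕ × ℕ) := ⋃ p : ℕ × ℕ, nthTieAt n p.1 p.2

lemma dependsOn_nthTieAt (n s k : ℕ) : DependsOn (· ∈ nthTieAt n s k) (Set.Iic s) := by
  intro ω ω' h
  have hcount : Nat.count (fun t => (ω t).1 = (ω t).2) s =
      Nat.count (fun t => (ω' t).1 = (ω' t).2) s := by
    refine le_antisymm (Nat.count_mono_left fun t ht htie => ?_)
      (Nat.count_mono_left fun t ht htie => ?_)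
    · rwa [← h t (Set.mem_Iic.2 ht.le)]
    · rwa [h t (Set.mem_Iic.2 ht.le)]
  simp only [nthTieAt, Set.mem_ofPred_eq, h s (Set.mem_Iic.2 le_rfl), hcount]

lemma pairwise_disjoint_nthTieAt (n : ℕ) :
    Pairwise (Function.onFun Disjoint fun p : ℕ × ℕ => nthTieAt n p.1 p.2) := by
  rintro ⟨s, k⟩ ⟨s', k'⟩ hne
  refine Set.disjoint_left.2 fun ω ⟨h1, c1⟩ ⟨h2, c2⟩ => hne ?_
  obtain rfl : s = s' := Nat.count_injective (by simp [h1]) (by simp [h2]) (c1.trans c2.symm)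
  rw [h1, Prod.mk.injEq] at h2
  exact Prod.ext rfl h2.1

lemma mem_nthTieAt_nth {ω : ℕ → ℕ × ℕ} {n : ℕ}
    (hn : ∀ hf : (Set.ofPred fun t => (ω t).1 = (ω t).2).Finite, n < hf.toFinset.card) :
    ω ∈ nthTieAt n (Nat.nth (fun t => (ω t).1 = (ω t).2) n)
      (ω (Nat.nth (fun t => (ω t).1 = (ω t).2) n)).1 := by
  exact ⟨Prod.ext rfl (Nat.nth_mem n hn).symm, Nat.count_nth hn⟩

lemma hasNthTie_succ_subset (n : ℕ) :
    hasNthTie (n + 1) ⊆ ⋃ p : ℕ × ℕ, nthTieAt n p.1 p.2 ∩ durationTail (p.1 + 1) := by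
  simp only [hasNthTie, Set.iUnion_subset_iff]
  rintro ⟨s', k'⟩ ω ⟨h1, c1⟩
  set p := fun t => (ω t).1 = (ω t).2
  have hlt : n < Nat.count p s' := by
    rw [c1]
    exact n.lt_succ_self
  refine Set.mem_iUnion.2 ⟨(Nat.nth p n, (ω (Nat.nth p n)).1), mem_nthTieAt_nth fun hf =>
    hlt.trans_le (Nat.count_le_card hf s'), s', Nat.nth_lt_of_lt_count hlt, by simp [h1]⟩

lemma setOf_infinite_subset_hasNthTie (n : ℕ) :
    {ω : ℕ → ℕ × ℕ | {t | (ω t).1 = (ω t).2}.Infinite} ⊆ hasNthTie n :=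
  fun ω hω => Set.mem_iUnion.2 ⟨(Nat.nth (fun t => (ω t).1 = (ω t).2) n,
    (ω (Nat.nth (fun t => (ω t).1 = (ω t).2) n)).1), mem_nthTieAt_nth fun hf => absurd hf hω⟩

end Urn

namespace IsUrnProcess

open Urn

variable {μ : Measure (ℕ → ℕ × ℕ)} {β r : ℝ} {x₀ : ℕ × ℕ}

lemma ae_apply_zero (hμ : IsUrnProcess μ β r x₀) : ∀ᵐ ω ∂μ, ω 0 = x₀ := by
  have := hμ.1
  have h := hμ.2 0 (fun _ => x₀) rfl
  simp only [Nat.le_zero, forall_eq, Finset.range_zero, Finset.prod_empty] at h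
  have hmeas := (dependsOn_mem_setOf_apply_eq (le_refl 0) x₀).measurableSet
  rw [ae_iff, ← Set.compl_ofPred, prob_compl_eq_zero_iff hmeas, ← ENNReal.ofReal_toReal
    (measure_ne_top μ _), h, ENNReal.ofReal_one]

lemma measure_cylinderUpTo_inter (hμ : IsUrnProcess μ β r x₀) (hr : 0 ≤ r) (s : ℕ)
    (ω : ℕ → ℕ × ℕ) (y : ℕ × ℕ) :
    μ (cylinderUpTo s ω ∩ {ω' | ω' (s + 1) = y}) =
      μ (cylinderUpTo s ω) * ENNReal.ofReal (urnStep β r (ω s) y) := by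
  have := hμ.1
  by_cases h0 : ω 0 = x₀
  · have h1 := hμ.2 (s + 1) (Function.update ω (s + 1) y) (by simp [h0])
    have h2 := hμ.2 s ω h0
    rw [cylinderUpTo_inter_setOf_apply_succ,
      ← ENNReal.ofReal_toReal (measure_ne_top μ (cylinderUpTo (s + 1) _)),
      ← ENNReal.ofReal_toReal (measure_ne_top μ (cylinderUpTo s ω)), cylinderUpTo, cylinderUpTo,
      h1, h2, Finset.prod_range_succ, ENNReal.ofReal_mul
      (Finset.prod_nonneg fun _ _ => urnStep_nonneg hr)]
    congr 2
    · refine Finset.prod_congr rfl fun t ht => ?_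
      rw [Finset.mem_range] at ht
      rw [Function.update_of_ne (by omega), Function.update_of_ne (by omega)]
    · rw [Function.update_of_ne (by omega), Function.update_self]
  · have hnull : μ (cylinderUpTo s ω) = 0 := by
      refine measure_mono_null (fun ω' hω' => ?_) (ae_iff.1 hμ.ae_apply_zero)
      rw [Set.mem_ofPred_eq, hω' 0 (Nat.zero_le _)]
      exact h0
    rw [hnull, zero_mul]
    exact measure_mono_null Set.inter_subset_left hnull

lemma measure_inter_apply_succ_eq (hμ : IsUrnProcess μ β r x₀) (hr : 0 ≤ r) {s : ℕ}
    {A : Set (ℕ → ℕ × ℕ)} {z : ℕ × ℕ} (hA : DependsOn (· ∈ A) (Set.Iic s))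
    (hAz : A ⊆ {ω | ω s = z}) (y : ℕ × ℕ) :
    μ (A ∩ {ω | ω (s + 1) = y}) = μ A * ENNReal.ofReal (urnStep β r z y) := by
  set R := (Set.Iic s).domRestrict (π := fun _ => ℕ × ℕ)
  have hR : Measurable R := by fun_prop
  have hmeas : ∀ q, MeasurableSet (R ⁻¹' {q}) := fun q => hR (measurableSet_singleton q)
  have hfiber : ∀ q ∈ R '' A, μ (R ⁻¹' {q} ∩ {ω | ω (s + 1) = y}) =
      μ (R ⁻¹' {q}) * ENNReal.ofReal (urnStep β r z y) := by
    rintro _ ⟨ω, hω, rfl⟩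
    rw [domRestrict_preimage_singleton, measure_cylinderUpTo_inter hμ hr, hAz hω]
  have hcount := (R '' A).to_countable
  have hE := (dependsOn_mem_setOf_apply_eq (le_refl (s + 1)) y).measurableSet
  rw [← hA.preimage_domRestrict_image, ← Measure.restrict_apply' hE,
    ← tsum_measure_preimage_singleton hcount fun q _ => hmeas q,
    ← tsum_measure_preimage_singleton hcount fun q _ => hmeas q, ← ENNReal.tsum_mul_right]
  refine tsum_congr fun q => ?_
  rw [Measure.restrict_apply (hmeas q), hfiber q q.2]

lemma ae_apply_succ (hμ : IsUrnProcess μ β r x₀) (hr : 0 ≤ r) :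
    ∀ᵐ ω ∂μ, ∀ s, ω (s + 1) = up (ω s) ∨ ω (s + 1) = dn (ω s) := by
  refine ae_all_iff.2 fun s => ?_
  have h : ∀ z y : ℕ × ℕ, ∀ᵐ ω ∂μ, ω s = z → ω (s + 1) = y → y = up z ∨ y = dn z := by
    intro z y
    by_cases hy : y = up z ∨ y = dn z
    · exact ae_of_all _ fun _ _ _ => hy
    rw [not_or] at hy
    refine ae_iff.2 (measure_mono_null (fun ω hω => ?_)
      ((measure_inter_apply_succ_eq hμ hr (dependsOn_mem_setOf_apply_eq (le_refl s) z)
        subset_rfl y).trans ?_))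
    · simp only [Set.mem_ofPred_eq, Classical.not_imp] at hω
      exact ⟨hω.1, hω.2.1⟩
    · rw [urnStep_eq_zero hy.1 hy.2, ENNReal.ofReal_zero, mul_zero]
  filter_upwards [ae_all_iff.2 fun z => ae_all_iff.2 (h z)] with ω hω
  exact hω (ω s) (ω (s + 1)) rfl rfl

lemma ae_pos (hμ : IsUrnProcess μ β r x₀) (hr : 0 ≤ r) (hx₀ : 0 < x₀.1) :
    ∀ᵐ ω ∂μ, ∀ t, 0 < (ω t).1 := by
  filter_upwards [hμ.ae_apply_zero, hμ.ae_apply_succ hr] with ω h0 hstep t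
  induction t with
  | zero => rwa [h0]
  | succ t ih => rcases hstep t with h | h <;> simp [h, up, dn, ih]

lemma measure_eq_add_up_dn (hμ : IsUrnProcess μ β r x₀) (hr : 0 ≤ r) {s : ℕ} {z : ℕ × ℕ}
    {B : Set (ℕ → ℕ × ℕ)} (hB : B ⊆ {ω | ω s = z}) :
    μ B = μ (B ∩ {ω | ω (s + 1) = up z}) + μ (B ∩ {ω | ω (s + 1) = dn z}) := by
  set G := {ω : ℕ → ℕ × ℕ | ∀ s, ω (s + 1) = up (ω s) ∨ ω (s + 1) = dn (ω s)}
  have hG : μ Gᶜ = 0 := hμ.ae_apply_succ hr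
  have hdiff : (B \ {ω | ω (s + 1) = up z}) ∩ G = (B ∩ {ω | ω (s + 1) = dn z}) ∩ G := by
    ext ω
    simp only [Set.mem_inter_iff, Set.mem_sdiff, Set.mem_ofPred_eq, G]
    constructor
    · rintro ⟨⟨hω, hup⟩, hstep⟩
      rw [← hB hω] at hup
      exact ⟨⟨hω, hB hω ▸ (hstep s).resolve_left hup⟩, hstep⟩
    · rintro ⟨⟨hω, hdn⟩, hstep⟩
      refine ⟨⟨hω, fun hup => up_ne_dn z (hup.symm.trans hdn)⟩, hstep⟩
  rw [← measure_inter_add_sdiff B (dependsOn_mem_setOf_apply_eq le_rfl (up z)).measurableSet,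
    ← measure_inter_conull (s := B \ _) hG, hdiff, measure_inter_conull hG]

lemma inter_noTieOn_eq_empty {s m : ℕ} {A : Set (ℕ → ℕ × ℕ)} {z : ℕ × ℕ}
    (hAz : A ⊆ {ω | ω s = z}) (hz : z.1 = z.2) : A ∩ noTieOn s m = ∅ :=
  Set.eq_empty_of_forall_notMem fun ω ⟨hω, hno⟩ =>
    hno 0 (Nat.zero_le m) (by rwa [Nat.add_zero, show ω s = z from hAz hω])

lemma measure_inter_noTieOn (hμ : IsUrnProcess μ β r x₀) (hr : 0 ≤ r) (m : ℕ) :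
    ∀ {s : ℕ} {A : Set (ℕ → ℕ × ℕ)} {z : ℕ × ℕ}, DependsOn (· ∈ A) (Set.Iic s) →
      A ⊆ {ω | ω s = z} → μ (A ∩ noTieOn s m) = μ A * ENNReal.ofReal (noTieProb β r m z) := by
  induction m with
  | zero =>
    intro s A z _ hAz
    by_cases hz : z.1 = z.2
    · simp [inter_noTieOn_eq_empty hAz hz, noTieProb_of_eq hz]
    have hA0 : A ⊆ noTieOn s 0 := fun ω hω k hk => by
      rwa [Nat.le_zero.1 hk, Nat.add_zero, show ω s = z from hAz hω]
    rw [noTieProb_zero_of_ne hz, ENNReal.ofReal_one, mul_one, Set.inter_eq_left.2 hA0]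
  | succ m ih =>
    intro s A z hA hAz
    by_cases hz : z.1 = z.2
    · simp [inter_noTieOn_eq_empty hAz hz, noTieProb_of_eq hz]
    have hAs : A ⊆ {ω | (ω s).1 ≠ (ω s).2} := fun ω hω => by
      rwa [Set.mem_ofPred_eq, show ω s = z from hAz hω]
    have hset : A ∩ noTieOn s (m + 1) = A ∩ noTieOn (s + 1) m := by
      rw [noTieOn_succ, ← Set.inter_assoc, Set.inter_eq_left.2 hAs]
    have hstep : ∀ y, μ (A ∩ noTieOn (s + 1) m ∩ {ω | ω (s + 1) = y}) =
        μ A * ENNReal.ofReal (urnStep β r z y) * ENNReal.ofReal (noTieProb β r m y) := fun y => by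
      rw [Set.inter_right_comm, ih (hA.mono (Set.Iic_subset_Iic.2 s.le_succ)
        |>.mem_inter (dependsOn_mem_setOf_apply_eq le_rfl y)) Set.inter_subset_right,
        measure_inter_apply_succ_eq hμ hr hA hAz]
    have hp := probUp_nonneg (β := β) (x := z) hr
    have hq := probDn_nonneg (β := β) (x := z) hr
    have hu := noTieProb_nonneg (β := β) hr m (up z)
    have hd := noTieProb_nonneg (β := β) hr m (dn z)
    rw [hset, measure_eq_add_up_dn hμ hr (Set.inter_subset_left.trans hAz), hstep, hstep,
      urnStep_up, urnStep_dn, noTieProb_succ_of_ne hz, ENNReal.ofReal_add (by positivity)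
      (by positivity), ENNReal.ofReal_mul hp, ENNReal.ofReal_mul hq]
    ring

lemma mul_measure_le_measure_inter_noTieOn (hμ : IsUrnProcess μ β r x₀) (hβ : 0 ≤ β)
    (hr : 1 < r) {s : ℕ} {A : Set (ℕ → ℕ × ℕ)} {z : ℕ × ℕ} (hA : DependsOn (· ∈ A) (Set.Iic s))
    (hAz : A ⊆ {ω | ω s = z}) (hz0 : 0 < z.1) (hz : z.1 = z.2) (m : ℕ) :
    ENNReal.ofReal ((r - 1) / (r + 1)) * μ A ≤ μ (A ∩ noTieOn (s + 1) m) := by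
  have hr0 : (0 : ℝ) ≤ r := by linarith
  have hAup : DependsOn (· ∈ A ∩ {ω | ω (s + 1) = up z}) (Set.Iic (s + 1)) :=
    (hA.mono (Set.Iic_subset_Iic.2 s.le_succ)).mem_inter (dependsOn_mem_setOf_apply_eq le_rfl _)
  calc ENNReal.ofReal ((r - 1) / (r + 1)) * μ A
      ≤ μ A * (ENNReal.ofReal (probUp β r z) * ENNReal.ofReal (noTieProb β r m (up z))) := by
        rw [mul_comm, ← ENNReal.ofReal_mul (probUp_nonneg hr0)]
        gcongr
        exact div_le_probUp_mul_noTieProb_up hβ hr hz0 hz m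
    _ = μ (A ∩ {ω | ω (s + 1) = up z} ∩ noTieOn (s + 1) m) := by
        rw [measure_inter_noTieOn hμ hr0 m hAup Set.inter_subset_right,
          measure_inter_apply_succ_eq hμ hr0 hA hAz, urnStep_up, mul_assoc]
    _ ≤ μ (A ∩ noTieOn (s + 1) m) := by
        gcongr
        exact Set.inter_subset_left

lemma measure_inter_durationTail_le (hμ : IsUrnProcess μ β r x₀) (hβ : 0 ≤ β) (hr : 1 < r)
    (hx₀ : 0 < x₀.1) {s : ℕ} {A : Set (ℕ → ℕ × ℕ)} {z : ℕ × ℕ}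
    (hA : DependsOn (· ∈ A) (Set.Iic s)) (hAz : A ⊆ {ω | ω s = z}) (hz : z.1 = z.2) :
    μ (A ∩ durationTail (s + 1)) ≤ ENNReal.ofReal (2 / (r + 1)) * μ A := by
  have := hμ.1
  rcases Nat.eq_zero_or_pos z.1 with hz0 | hz0
  · have hA0 : μ A = 0 := measure_mono_null (fun ω hω => by simp [show ω s = z from hAz hω, hz0])
      (ae_iff.1 ((hμ.ae_pos (by linarith) hx₀).mono fun ω h => h s))
    rw [hA0, mul_zero]
    exact (measure_mono_null Set.inter_subset_left hA0).le
  have hsplit : ENNReal.ofReal (2 / (r + 1)) + ENNReal.ofReal ((r - 1) / (r + 1)) = 1 := by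
    rw [← ENNReal.ofReal_add (by positivity) (div_nonneg (by linarith) (by linarith)),
      ← add_div, show 2 + (r - 1) = r + 1 by ring, div_self (by linarith), ENNReal.ofReal_one]
  rw [← iUnion_compl_noTieOn, Set.inter_iUnion, Monotone.measure_iUnion]
  · exact iSup_le fun m => measure_sdiff_le_of_mul_le_measure_inter
      (dependsOn_noTieOn _ m).measurableSet hsplit
      (hμ.mul_measure_le_measure_inter_noTieOn hβ hr hA hAz hz0 hz m)
  · intro m m' hmm' ω ⟨hω, hno⟩
    exact ⟨hω, fun h => hno fun k hk => h k (hk.trans hmm')⟩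

lemma measure_setOf_apply_eq_notMem_durationTail (hμ : IsUrnProcess μ β r x₀) (hβ0 : 0 ≤ β)
    (hβ1 : β < 1) (hr : 1 < r) {s : ℕ} {z : ℕ × ℕ} (hz0 : 0 < z.1) (hz : z.1 ≤ z.2) :
    μ {ω | ω s = z ∧ ω ∉ durationTail s} = 0 := by
  have := hμ.1
  have hbound : ∀ m, μ {ω | ω s = z ∧ ω ∉ durationTail s} ≤ ENNReal.ofReal (noTieProb β r m z) := by
    intro m
    calc μ {ω | ω s = z ∧ ω ∉ durationTail s}
        ≤ μ ({ω | ω s = z} ∩ noTieOn s m) :=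
          measure_mono fun ω ⟨h1, h2⟩ => ⟨h1, compl_durationTail_subset_noTieOn s m h2⟩
      _ = μ {ω | ω s = z} * ENNReal.ofReal (noTieProb β r m z) :=
          measure_inter_noTieOn hμ (by linarith) m (dependsOn_mem_setOf_apply_eq le_rfl z)
            subset_rfl
      _ ≤ ENNReal.ofReal (noTieProb β r m z) := mul_le_of_le_one_left' prob_le_one
  refine nonpos_iff_eq_zero.1 (ENNReal.le_of_forall_pos_le_add fun ε hε _ => ?_)
  obtain ⟨m, hm⟩ := exists_noTieProb_lt hβ0 hβ1 hr hz0 hz (NNReal.coe_pos.2 hε)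
  calc _ ≤ ENNReal.ofReal (noTieProb β r m z) := hbound m
    _ ≤ ENNReal.ofReal ε := ENNReal.ofReal_le_ofReal hm.le
    _ = 0 + ε := by rw [zero_add, ENNReal.ofReal_coe_nnreal]

lemma ae_mem_durationTail (hμ : IsUrnProcess μ β r x₀) (hβ0 : 0 ≤ β) (hβ1 : β < 1) (hr : 1 < r)
    (s : ℕ) : ∀ᵐ ω ∂μ, 0 < (ω s).1 → (ω s).1 ≤ (ω s).2 → ω ∈ durationTail s := by
  have h : ∀ z : ℕ × ℕ, ∀ᵐ ω ∂μ, ω s = z → 0 < z.1 → z.1 ≤ z.2 → ω ∈ durationTail s := by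
    intro z
    by_cases hz : 0 < z.1 ∧ z.1 ≤ z.2
    · refine ae_iff.2 (measure_mono_null (fun ω hω => ?_)
        (hμ.measure_setOf_apply_eq_notMem_durationTail (s := s) hβ0 hβ1 hr hz.1 hz.2))
      simp only [Set.mem_ofPred_eq, Classical.not_imp] at hω
      exact ⟨hω.1, hω.2.2.2⟩
    · exact ae_of_all _ fun _ _ h1 h2 => absurd ⟨h1, h2⟩ hz
  filter_upwards [ae_all_iff.2 h] with ω hω
  exact hω (ω s) rfl

lemma measure_hasNthTie_succ_le (hμ : IsUrnProcess μ β r x₀) (hβ : 0 ≤ β) (hr : 1 < r)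
    (hx₀ : 0 < x₀.1) (n : ℕ) :
    μ (hasNthTie (n + 1)) ≤ ENNReal.ofReal (2 / (r + 1)) * μ (hasNthTie n) :=
  calc μ (hasNthTie (n + 1))
      ≤ μ (⋃ p : ℕ × ℕ, nthTieAt n p.1 p.2 ∩ durationTail (p.1 + 1)) :=
        measure_mono (hasNthTie_succ_subset n)
    _ ≤ ∑' p : ℕ × ℕ, μ (nthTieAt n p.1 p.2 ∩ durationTail (p.1 + 1)) := measure_iUnion_le _
    _ ≤ ∑' p : ℕ × ℕ, ENNReal.ofReal (2 / (r + 1)) * μ (nthTieAt n p.1 p.2) :=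
        ENNReal.tsum_le_tsum fun p => hμ.measure_inter_durationTail_le hβ hr hx₀
          (dependsOn_nthTieAt n p.1 p.2) (fun _ hω => hω.1) rfl
    _ = ENNReal.ofReal (2 / (r + 1)) * μ (hasNthTie n) := by
        rw [ENNReal.tsum_mul_left, hasNthTie, measure_iUnion (pairwise_disjoint_nthTieAt n)
          fun p => (dependsOn_nthTieAt n p.1 p.2).measurableSet]

lemma ae_finite_ties (hμ : IsUrnProcess μ β r x₀) (hβ : 0 ≤ β) (hr : 1 < r) (hx₀ : 0 < x₀.1) :
    ∀ᵐ ω ∂μ, {t | (ω t).1 = (ω t).2}.Finite := by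
  have := hμ.1
  have hρ : ENNReal.ofReal (2 / (r + 1)) < 1 := by
    rw [ENNReal.ofReal_lt_one, div_lt_one (by linarith)]
    linarith
  have hbound : ∀ n, μ (hasNthTie n) ≤ ENNReal.ofReal (2 / (r + 1)) ^ n := by
    intro n
    induction n with
    | zero => simpa using prob_le_one
    | succ n ih =>
      calc μ (hasNthTie (n + 1)) ≤ ENNReal.ofReal (2 / (r + 1)) * μ (hasNthTie n) :=
            hμ.measure_hasNthTie_succ_le hβ hr hx₀ n
        _ ≤ ENNReal.ofReal (2 / (r + 1)) ^ (n + 1) := by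
            rw [pow_succ']
            gcongr
  refine ae_iff.2 (le_antisymm (ge_of_tendsto' (ENNReal.tendsto_pow_atTop_nhds_zero_of_lt_one hρ)
    fun n => (measure_mono (setOf_infinite_subset_hasNthTie n)).trans (hbound n)) bot_le)

end IsUrnProcess

theorem stmt_13_general (β r : ℝ) (hβ0 : 0 ≤ β) (hβ1 : β < 1) (hr : 1 < r)
    (x₀ : ℕ × ℕ) (hx₁ : 0 < x₀.1)
    (μ : Measure (ℕ → ℕ × ℕ)) (hμ : IsUrnProcess μ β r x₀) :
    ∀ᵐ ω ∂μ, ∃ tstar : ℕ, ∀ t : ℕ, tstar ≤ t → (ω t).2 < (ω t).1 := by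
  have hr0 : (0 : ℝ) ≤ r := by linarith
  filter_upwards [hμ.ae_apply_succ hr0, hμ.ae_pos hr0 hx₁, hμ.ae_finite_ties hβ0 hr hx₁,
    ae_all_iff.2 (hμ.ae_mem_durationTail hβ0 hβ1 hr)] with ω hstep hpos hfin htail
  obtain ⟨T, hT⟩ := hfin.bddAbove
  have hnotie : ∀ t, T < t → (ω t).1 ≠ (ω t).2 := fun t ht h => absurd (hT h) (by omega)
  refine ⟨T + 1, fun t ht => ?_⟩
  induction t, ht using Nat.le_induction with
  | base =>
    by_contra! h
    obtain ⟨s, hs, htie⟩ := htail (T + 1) (hpos _) h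
    exact hnotie s (by omega) htie
  | succ t ht ih =>
    have := hnotie (t + 1) (by omega)
    rcases hstep t with h | h <;> simp only [h, Urn.up, Urn.dn] at this ⊢ <;> omega

/-- For `0 ≤ β < 1` and `r > 1`, in a `(β,r,x₀)`-urn process the fitter
color 1 almost surely eventually leads forever: with probability one there is a time `t*`
such that `X₁(t) > X₂(t)` for all `t ≥ t*`. -/
theorem stmt_13 (β r : ℝ) (hβ0 : 0 ≤ β) (hβ1 : β < 1) (hr : 1 < r)
    (x₀ : ℕ × ℕ) (hx₁ : 0 < x₀.1) (hx₂ : 0 < x₀.2)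
    (μ : Measure (ℕ → ℕ × ℕ)) (hμ : IsUrnProcess μ β r x₀) :
    ∀ᵐ ω ∂μ, ∃ tstar : ℕ, ∀ t : ℕ, tstar ≤ t → (ω t).2 < (ω t).1 :=
  stmt_13_general β r hβ0 hβ1 hr x₀ hx₁ μ hμ

end
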